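/- For n ≥ 1 and pairwise distinct propositions p₁,…,pₙ,q₁,…,qₙ forming domain Φ, and for each non-constant function f : (Fin n → Bool) → Bool, the team X(f) = { s : Φ → Bool | f(s(p⃗)) = true and f(s(q⃗)) = false } satisfies the exclusion atom p⃗ | q⃗ and is maximal among teams satisfying it; moreover distinct non-constant f yield distinct X(f). Hence the exclusion atom has at least 2^(2^n) − 2 maximal teams. -/
import Mathlib


/-- An assignment over domain {p₁,…,pₙ,q₁,…,qₙ}: the p-values and the q-values. -/
abbrev ExcAssign (n : ℕ) := (Fin n → Bool) × (Fin n → Bool)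

/-- The exclusion atom p⃗ | q⃗. -/
def ExcAtom {n : ℕ} (T : Set (ExcAssign n)) : Prop :=
  ∀ s ∈ T, ∀ s' ∈ T, s.1 ≠ s'.2

lemma nonconst_vals {n : ℕ} (f : (Fin n → Bool) → Bool) (h : ∃ b b', f b ≠ f b') :
    (∃ a, f a = true) ∧ (∃ b, f b = false) := by
  obtain ⟨b, b', hne⟩ := h
  cases hb : f b <;> cases hb' : f b'
  · exact absurd (hb.trans hb'.symm) hne
  · exact ⟨⟨b', hb'⟩, ⟨b, hb⟩⟩
  · exact ⟨⟨b, hb⟩, ⟨b', hb'⟩⟩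
  · exact absurd (hb.trans hb'.symm) hne

theorem exclusion_atom_maximal_teams (n : ℕ) (hn : 1 ≤ n) :
    (∀ f : (Fin n → Bool) → Bool, (∃ b b', f b ≠ f b') →
      ExcAtom {s : ExcAssign n | f s.1 = true ∧ f s.2 = false} ∧
      (∀ Y : Set (ExcAssign n),
        {s : ExcAssign n | f s.1 = true ∧ f s.2 = false} ⊂ Y → ¬ ExcAtom Y)) ∧
    (∀ f₁ f₂ : (Fin n → Bool) → Bool,
      (∃ b b', f₁ b ≠ f₁ b') → (∃ b b', f₂ b ≠ f₂ b') → f₁ ≠ f₂ →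
      ({s : ExcAssign n | f₁ s.1 = true ∧ f₁ s.2 = false} : Set (ExcAssign n)) ≠
      ({s : ExcAssign n | f₂ s.1 = true ∧ f₂ s.2 = false})) := by
  constructor
  · intro f hf
    obtain ⟨⟨a, ha⟩, ⟨b, hb⟩⟩ := nonconst_vals f hf
    constructor
    · intro s hs s' hs' heq
      exact absurd (heq ▸ hs.1) (by simp [hs'.2])
    · intro Y hY hYatom
      have hsub := hY.subset
      obtain ⟨t, htY, htX⟩ := Set.exists_of_ssubset hY
      simp only [Set.mem_setOf_eq, not_and] at htX
      cases ht1 : f t.1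
      · -- t.1 has f-value false; (a, t.1) ∈ X ⊆ Y, contradiction with t
        have hs : ((a, t.1) : ExcAssign n) ∈ Y := hsub ⟨ha, ht1⟩
        exact hYatom t htY (a, t.1) hs rfl
      · have ht2 := htX ht1
        rw [Bool.not_eq_false] at ht2
        have hs : ((t.2, b) : ExcAssign n) ∈ Y := hsub ⟨ht2, hb⟩
        exact hYatom (t.2, b) hs t htY rfl
  · intro f₁ f₂ h₁ h₂ hne heq
    obtain ⟨c, hc⟩ := Function.ne_iff.mp hne
    obtain ⟨⟨a₁, ha₁⟩, ⟨b₁, hb₁⟩⟩ := nonconst_vals f₁ h₁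
    obtain ⟨⟨a₂, ha₂⟩, ⟨b₂, hb₂⟩⟩ := nonconst_vals f₂ h₂
    cases h1c : f₁ c
    · have h2c : f₂ c = true := by
        cases h : f₂ c
        · exact absurd (h1c.trans h.symm) hc
        · rfl
      have : ((c, b₂) : ExcAssign n) ∈ {s : ExcAssign n | f₁ s.1 = true ∧ f₁ s.2 = false} :=
        heq ▸ (⟨h2c, hb₂⟩ : ((c, b₂) : ExcAssign n) ∈ {s : ExcAssign n | f₂ s.1 = true ∧ f₂ s.2 = false})
      simp [h1c] at this
    · have h2c : f₂ c = false := by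
        cases h : f₂ c
        · rfl
        · exact absurd (h1c.trans h.symm) hc
      have : ((c, b₁) : ExcAssign n) ∈ {s : ExcAssign n | f₂ s.1 = true ∧ f₂ s.2 = false} :=
        heq ▸ (⟨h1c, hb₁⟩ : ((c, b₁) : ExcAssign n) ∈ {s : ExcAssign n | f₁ s.1 = true ∧ f₁ s.2 = false})
      simp [h2c] at this
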